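/- arXiv:0809.2280 — 2 statements merged into one kernel-verified Lean document; each statement's English description precedes it below -/
import Mathlib

section
/- For G ∈ SU(2) and a unit vector X̂ ∈ ℝ³ with associated traceless Hermitian matrix X̂ = X̂^i σ_i, the real part of ln tr[½(𝟙 + X̂)G] is nonpositive, and it is zero if and only if G commutes with X̂ (equivalently [G, X̂] = 0), in which case tr[½(𝟙 + X̂)G] = e^{iΘ} for some real Θ. -/
open Matrix Complex Finset

noncomputable def σ : Fin 3 → Matrix (Fin 2) (Fin 2) ℂ
  | 0 => !![0, 1; 1, 0]
  | 1 => !![0, -Complex.I; Complex.I, 0]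
  | 2 => !![1, 0; 0, -1]

noncomputable def su2vec (v : Fin 3 → ℝ) : Matrix (Fin 2) (Fin 2) ℂ :=
  ∑ i, (v i : ℂ) • σ i

noncomputable def levi {n m : ℕ} (x : Fin n → Fin m) : ℝ :=
  ∏ p ∈ Finset.univ.filter (fun p : Fin n × Fin n => p.1 < p.2),
    ((((x p.2 : ℕ) : ℤ) - ((x p.1 : ℕ) : ℤ)).sign : ℝ)

noncomputable def eps3 (i j k : Fin 3) : ℝ := levi ![i, j, k]
noncomputable def eps4 (i j k l : Fin 4) : ℝ := levi ![i, j, k, l]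
noncomputable def eps5 (i j k l m : Fin 5) : ℝ := levi ![i, j, k, l, m]

noncomputable def det4 (a b c d : Fin 4 → ℝ) : ℝ := Matrix.det (Matrix.of fun I r => ![a, b, c, d] r I)

noncomputable def tstar (a b c : Fin 4 → ℝ) (I : Fin 4) : ℝ :=
  ∑ J, ∑ K, ∑ L, eps4 I J K L * a J * b K * c L

noncomputable def hodge (X : Matrix (Fin 4) (Fin 4) ℝ) : Matrix (Fin 4) (Fin 4) ℝ :=
  Matrix.of fun I J => (1 / 2) * ∑ K, ∑ L, eps4 I J K L * X K L

noncomputable def sdPart (X : Matrix (Fin 4) (Fin 4) ℝ) (i : Fin 3) : ℝ :=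
  (1 / 2) * (∑ j, ∑ k, eps3 i j k * X j.succ k.succ) + X 0 i.succ

noncomputable def asdPart (X : Matrix (Fin 4) (Fin 4) ℝ) (i : Fin 3) : ℝ :=
  (1 / 2) * (∑ j, ∑ k, eps3 i j k * X j.succ k.succ) - X 0 i.succ

noncomputable def wedgeV (a b : Fin 4 → ℝ) : Matrix (Fin 4) (Fin 4) ℝ :=
  Matrix.of fun I J => a I * b J - a J * b I

/-! Every `G ∈ SU(2)` is `a₀ 𝟙 + i a·σ` with `a₀² + |a|² = 1`. Since
`(u·σ)(v·σ) = (u ⬝ v) 𝟙 + i (u × v)·σ` and the Pauli matrices are traceless,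
`tr[½(𝟙 + X̂)G] = a₀ + i (X̂ ⬝ a)` and `[G, X̂] = -2 (a × X̂)·σ`. Lagrange's identity with `|X̂| = 1`
gives `|tr[½(𝟙 + X̂)G]|² = 1 - |a × X̂|²`, so the modulus is at most `1`, with equality exactly
when `a × X̂ = 0`, i.e. when `G` commutes with `X̂`. -/

lemma su2vec_eq (v : Fin 3 → ℝ) :
    su2vec v = !![(v 2 : ℂ), v 0 - I * v 1; v 0 + I * v 1, -v 2] := by
  ext i j
  fin_cases i <;> fin_cases j <;> simp [su2vec, σ, Fin.sum_univ_three] <;> ring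

lemma su2vec_neg (v : Fin 3 → ℝ) : su2vec (-v) = -su2vec v := by
  simp [su2vec]

lemma su2vec_eq_zero_iff {v : Fin 3 → ℝ} : su2vec v = 0 ↔ v = 0 := by
  refine ⟨fun h => ?_, fun h => by simp [h, su2vec]⟩
  have h00 := congrFun (congrFun h 0) 0
  have h10 := congrFun (congrFun h 1) 0
  simp only [su2vec_eq, of_apply, cons_val', cons_val_zero, cons_val_one, empty_val',
    cons_val_fin_one, Matrix.zero_apply] at h00 h10
  ext k
  fin_cases k
  · simpa using congrArg re h10
  · simpa using congrArg im h10
  · simpa using h00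

lemma trace_su2vec (v : Fin 3 → ℝ) : trace (su2vec v) = 0 := by
  simp [su2vec_eq, trace_fin_two]

lemma su2vec_mul_su2vec (u v : Fin 3 → ℝ) :
    su2vec u * su2vec v = ((u ⬝ᵥ v : ℝ) : ℂ) • 1 + I • su2vec (u ⨯₃ v) := by
  rw [su2vec_eq, su2vec_eq, su2vec_eq]
  ext i j
  fin_cases i <;> fin_cases j <;>
    simp [dotProduct, Fin.sum_univ_three, cross_apply] <;> ring_nf <;> simp only [I_sq] <;> ring

lemma su2vec_mul_sub_mul_su2vec (u v : Fin 3 → ℝ) :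
    su2vec u * su2vec v - su2vec v * su2vec u = (2 * I) • su2vec (u ⨯₃ v) := by
  rw [su2vec_mul_su2vec, su2vec_mul_su2vec, dotProduct_comm, ← cross_anticomm, su2vec_neg]
  module

lemma exists_eq_smul_one_add_I_smul_su2vec {G : Matrix (Fin 2) (Fin 2) ℂ}
    (hGu : star G * G = 1) (hGd : G.det = 1) :
    ∃ (a₀ : ℝ) (a : Fin 3 → ℝ), a₀ ^ 2 + a ⬝ᵥ a = 1 ∧ G = (a₀ : ℂ) • 1 + I • su2vec a := by
  have hstar : star G = adjugate G := by
    rw [← inv_eq_left_inv hGu, Matrix.inv_def, hGd]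
    simp
  rw [adjugate_fin_two] at hstar
  have h11 : G 1 1 = starRingEnd ℂ (G 0 0) := by
    simpa [star_apply] using (congrFun (congrFun hstar 0) 0).symm
  have h10 : G 1 0 = -starRingEnd ℂ (G 0 1) := by
    simpa [star_apply] using congrArg (starRingEnd ℂ) (congrFun (congrFun hstar 0) 1)
  refine ⟨(G 0 0).re, ![(G 0 1).im, (G 0 1).re, (G 0 0).im], ?_, ?_⟩
  · rw [det_fin_two, h11, h10] at hGd
    have hre := congrArg re hGd
    simp only [mul_neg, sub_neg_eq_add, add_re, mul_re, conj_re, conj_im, one_re, dotProduct,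
      Fin.sum_univ_three, cons_val_zero, cons_val_one, Matrix.cons_val] at hre ⊢
    linear_combination hre
  · ext i j
    fin_cases i <;> fin_cases j <;> apply Complex.ext <;> simp [su2vec_eq, h11, h10]

lemma trace_half_one_add_su2vec_mul (X a : Fin 3 → ℝ) (a₀ : ℝ) :
    trace (((1 : ℝ) / 2 : ℂ) • ((1 : Matrix (Fin 2) (Fin 2) ℂ) + su2vec X) *
      ((a₀ : ℂ) • 1 + I • su2vec a)) = a₀ + (X ⬝ᵥ a : ℝ) * I := by
  simp [add_mul, mul_add, trace_add, trace_smul, su2vec_mul_su2vec, trace_su2vec]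
  ring

lemma commute_iff_cross_eq_zero (X a : Fin 3 → ℝ) (a₀ : ℝ) :
    ((a₀ : ℂ) • 1 + I • su2vec a) * su2vec X = su2vec X * ((a₀ : ℂ) • 1 + I • su2vec a) ↔
      a ⨯₃ X = 0 := by
  have hcomm : ((a₀ : ℂ) • 1 + I • su2vec a) * su2vec X - su2vec X * ((a₀ : ℂ) • 1 + I • su2vec a)
      = (-2 : ℂ) • su2vec (a ⨯₃ X) := by
    calc _ = I • (su2vec a * su2vec X - su2vec X * su2vec a) := by
          simp only [add_mul, mul_add, smul_mul_assoc, mul_smul_comm, one_mul, mul_one]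
          module
      _ = (-2 : ℂ) • su2vec (a ⨯₃ X) := by
          rw [su2vec_mul_sub_mul_su2vec, smul_smul, ← mul_assoc, mul_comm I 2, mul_assoc, I_mul_I]
          norm_num
  rw [← sub_eq_zero, hcomm, smul_eq_zero, su2vec_eq_zero_iff]
  norm_num

/-- Re ln tr[(1/2)(1 + X̂)G] ≤ 0, with equality (modulus 1) iff [G, X̂] = 0. -/
theorem stmt1 (G : Matrix (Fin 2) (Fin 2) ℂ)
    (hGu : star G * G = 1) (hGd : G.det = 1)
    (X : Fin 3 → ℝ) (hX : ∑ i, X i ^ 2 = 1) :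
    (Complex.log
        (Matrix.trace (((1 : ℝ) / 2 : ℂ) • ((1 : Matrix (Fin 2) (Fin 2) ℂ) + su2vec X) * G))).re ≤ 0 ∧
      (‖
          (Matrix.trace (((1 : ℝ) / 2 : ℂ) • ((1 : Matrix (Fin 2) (Fin 2) ℂ) + su2vec X) * G))‖ = 1 ↔
        G * su2vec X = su2vec X * G) ∧
      (G * su2vec X = su2vec X * G →
        ∃ Θ : ℝ,
          Matrix.trace (((1 : ℝ) / 2 : ℂ) • ((1 : Matrix (Fin 2) (Fin 2) ℂ) + su2vec X) * G) =
            Complex.exp (Complex.I * Θ)) := by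
  obtain ⟨a₀, a, ha, rfl⟩ := exists_eq_smul_one_add_I_smul_su2vec hGu hGd
  have hXX : X ⬝ᵥ X = 1 := by simpa [dotProduct, sq] using hX
  rw [trace_half_one_add_su2vec_mul, commute_iff_cross_eq_zero]
  set t : ℂ := a₀ + (X ⬝ᵥ a : ℝ) * I
  have ht : ‖t‖ ^ 2 = 1 - (a ⨯₃ X) ⬝ᵥ (a ⨯₃ X) := by
    rw [Complex.sq_norm, normSq_add_mul_I, cross_dot_cross, hXX, dotProduct_comm X a]
    linear_combination ha
  have hcross : 0 ≤ (a ⨯₃ X) ⬝ᵥ (a ⨯₃ X) := dotProduct_self_star_nonneg _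
  have hnorm : ‖t‖ = 1 ↔ a ⨯₃ X = 0 := by
    rw [← dotProduct_self_eq_zero, ← pow_eq_one_iff_of_nonneg (norm_nonneg t) two_ne_zero, ht]
    constructor <;> intro h <;> linarith
  refine ⟨?_, hnorm, fun h => ?_⟩
  · rw [log_re]
    exact Real.log_nonpos (norm_nonneg t) ((sq_le_one_iff₀ (norm_nonneg t)).mp (by linarith))
  · obtain ⟨Θ, hΘ⟩ := (norm_eq_one_iff t).mp (hnorm.mpr h)
    exact ⟨Θ, by rw [← hΘ, mul_comm]⟩
end

section
/- With E_{ij} a nondegenerate closed co-tetrad on five labels, U^i its dual tetrad, and V₄ = det(E_{21},…,E_{51}), the bivector identity V₄ (U^i ∧ U^j) = ∑_{m,n} ε^{kijmn} ½ ε^{IJ}{}_{MN} E_{mk}^M E_{nk}^N holds for any k ≠ i, j; i.e., V₄·(U^i ∧ U^j) = ⋆(E_{mk} ∧ E_{nk}) where {i,j,k,m,n} = {1,…,5} with appropriate orientation sign. -/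
open Matrix Complex Finset

/-!
Closedness makes `E_{ab} = e_a - e_b` for the points `e_l = E_{l0}`, so
`det (E_{ak}, E_{bk}, E_{ck}, E_{dk})` is the oriented volume of the simplex
`(e_k, e_a, e_b, e_c, e_d)`, namely `ε_{kabcd} V₄`. Both sides of the identity are bilinear forms
and the vectors `E_{pk}` span `ℝ⁴`, so it suffices to pair them with `E_{pk}` and `E_{qk}`. By
duality, and since `k ≠ i, j`, the left side gives `V₄ (δ_{pi} δ_{qj} - δ_{pj} δ_{qi})`; since
`⟪a, ⋆(x ∧ y) b⟫ = det (a, b, x, y)`, the right side gives `½ ∑ ε_{kijmn} ε_{kpqmn} V₄`, and the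
two agree by the contraction identity for `ε`.
-/

theorem levi_eq_prod_prod_Iio {n m : ℕ} (x : Fin n → Fin m) :
    levi x = ∏ j, ∏ i ∈ Iio j, ((((x j : ℕ) : ℤ) - ((x i : ℕ) : ℤ)).sign : ℝ) := by
  rw [levi, prod_filter, Fintype.prod_prod_type, prod_comm]
  refine prod_congr rfl fun j _ => ?_
  rw [← prod_filter, filter_gt_eq_Iio]

theorem levi_perm_eq_sign {n : ℕ} (σ : Equiv.Perm (Fin n)) :
    levi σ = ((Equiv.Perm.sign σ : ℤ) : ℝ) := by
  rw [levi_eq_prod_prod_Iio, σ.sign_eq_prod_prod_Iio]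
  push_cast
  refine prod_congr rfl fun j _ => prod_congr rfl fun i hi => ?_
  have hne : σ i ≠ σ j := σ.injective.ne (mem_Iio.mp hi).ne
  rcases lt_or_gt_of_ne hne with h | h
  · have : ((σ i : ℕ) : ℤ) < (σ j : ℕ) := by exact_mod_cast h
    simp [h, Int.sign_eq_one_of_pos (sub_pos.mpr this)]
  · have : ((σ j : ℕ) : ℤ) < (σ i : ℕ) := by exact_mod_cast h
    simp [h.not_gt, Int.sign_eq_neg_one_of_neg (sub_neg.mpr this)]

theorem levi_eq_zero_of_not_injective {n m : ℕ} {x : Fin n → Fin m}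
    (hx : ¬Function.Injective x) : levi x = 0 := by
  obtain ⟨a, b, hab, hne⟩ := Function.not_injective_iff.mp hx
  rw [levi_eq_prod_prod_Iio]
  rcases lt_or_gt_of_ne hne with h | h
  · exact prod_eq_zero (mem_univ b) (prod_eq_zero (mem_Iio.mpr h) (by simp [hab]))
  · exact prod_eq_zero (mem_univ a) (prod_eq_zero (mem_Iio.mpr h) (by simp [hab]))

theorem det_eq_sum_levi {n : ℕ} (M : Matrix (Fin n) (Fin n) ℝ) :
    M.det = ∑ f : Fin n → Fin n, levi f * ∏ r, M (f r) r := by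
  let toFun : Equiv.Perm (Fin n) ↪ (Fin n → Fin n) := ⟨(⇑), DFunLike.coe_injective⟩
  rw [det_apply, ← sum_subset (subset_univ (univ.map toFun)), sum_map]
  · simp [toFun, levi_perm_eq_sign, Units.smul_def]
  · intro f _ hf
    suffices ¬Function.Injective f by rw [levi_eq_zero_of_not_injective this, zero_mul]
    intro hinj
    exact hf (mem_map.mpr ⟨Equiv.ofBijective f hinj.bijective_of_finite, mem_univ _, rfl⟩)

theorem det_submatrix_eq_levi_mul {n : ℕ} (M : Matrix (Fin n) (Fin n) ℝ) (x : Fin n → Fin n) :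
    (M.submatrix x id).det = levi x * M.det := by
  by_cases hx : Function.Injective x
  · have h := levi_perm_eq_sign (Equiv.ofBijective x hx.bijective_of_finite)
    rw [Equiv.coe_ofBijective] at h
    rw [h]
    exact det_permute (Equiv.ofBijective x _) M
  · obtain ⟨a, b, hab, hne⟩ := Function.not_injective_iff.mp hx
    rw [levi_eq_zero_of_not_injective hx, zero_mul]
    exact det_zero_of_row_eq hne (by ext; simp [hab])

theorem Fin.sum_univ_fun_succ {M α : Type*} [AddCommMonoid M] [Fintype α] {n : ℕ}
    (g : (Fin (n + 1) → α) → M) : ∑ f, g f = ∑ a, ∑ t : Fin n → α, g (Matrix.vecCons a t) := by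
  rw [← (Fin.consEquiv fun _ => α).sum_comp, Fintype.sum_prod_type]
  rfl

theorem Fin.sum_univ_fun_zero {M α : Type*} [AddCommMonoid M] [Fintype α] (g : (Fin 0 → α) → M) :
    ∑ f, g f = g ![] := by
  rw [Fintype.sum_unique]
  congr

theorem Fin.sum_univ_fun_four {M α : Type*} [AddCommMonoid M] [Fintype α]
    (g : (Fin 4 → α) → M) : ∑ f, g f = ∑ I, ∑ J, ∑ K, ∑ L, g ![I, J, K, L] := by
  simp only [Fin.sum_univ_fun_succ, Fin.sum_univ_fun_zero]

theorem det4_eq_sum_eps4 (a b c d : Fin 4 → ℝ) :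
    det4 a b c d = ∑ I, ∑ J, ∑ K, ∑ L, eps4 I J K L * a I * b J * c K * d L := by
  rw [det4, det_eq_sum_levi, Fin.sum_univ_fun_four]
  simp only [Fin.prod_univ_four, of_apply, eps4, Matrix.cons_val, mul_assoc]

theorem det4_eq_det (a b c d : Fin 4 → ℝ) : det4 a b c d = (Matrix.of ![a, b, c, d]).det := by
  rw [det4, ← det_transpose]
  rfl

theorem det_sub_eq_det_cons_one {n : ℕ} (y : Fin (n + 1) → Fin n → ℝ) :
    (Matrix.of fun r : Fin n => y r.succ - y 0).det =
      (Matrix.of fun r => (Fin.cons 1 (y r) : Fin (n + 1) → ℝ)).det := by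
  let B : Matrix (Fin (n + 1)) (Fin (n + 1)) ℝ :=
    Matrix.of fun r => Fin.cons (if r = 0 then 1 else 0) (if r = 0 then y 0 else y r - y 0)
  have hB : (Matrix.of fun r => (Fin.cons 1 (y r) : Fin (n + 1) → ℝ)).det = B.det := by
    refine det_eq_of_forall_row_eq_smul_add_const (fun r => if r = 0 then 0 else 1) 0 (by simp)
      fun r c => ?_
    by_cases hr : r = 0
    · subst hr; simp [B]
    · cases c using Fin.cases <;> simp [B, hr]
  rw [hB, det_succ_column_zero, Fin.sum_univ_succ]
  simp [B, Fin.succ_ne_zero]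
  rfl

theorem det_sub_comp_eq_levi_mul {n : ℕ} (y : Fin (n + 1) → Fin n → ℝ)
    (x : Fin (n + 1) → Fin (n + 1)) :
    (Matrix.of fun r : Fin n => y (x r.succ) - y (x 0)).det =
      levi x * (Matrix.of fun r : Fin n => y r.succ - y 0).det := by
  rw [det_sub_eq_det_cons_one y, ← det_submatrix_eq_levi_mul]
  exact det_sub_eq_det_cons_one (y ∘ x)

theorem dotProduct_wedgeV_mulVec (a b u w : Fin 4 → ℝ) :
    a ⬝ᵥ wedgeV u w *ᵥ b = (a ⬝ᵥ u) * (w ⬝ᵥ b) - (a ⬝ᵥ w) * (u ⬝ᵥ b) := by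
  simp only [dotProduct, mulVec, wedgeV, of_apply, Fin.sum_univ_four]
  ring

theorem dotProduct_hodge_vecMulVec_mulVec (a b x y : Fin 4 → ℝ) :
    a ⬝ᵥ hodge (vecMulVec x y) *ᵥ b = det4 a b x y / 2 := by
  simp only [det4_eq_sum_eps4, dotProduct, mulVec, hodge, of_apply, vecMulVec_apply, mul_sum,
    sum_mul, sum_div]
  refine sum_congr rfl fun I _ => sum_congr rfl fun J _ => sum_congr rfl fun K _ =>
    sum_congr rfl fun L _ => ?_
  ring

theorem Matrix.ext_of_dotProduct_mulVec_eq {ι n R : Type*} [Fintype n] [DecidableEq n]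
    [CommSemiring R] {v : ι → n → R} (hv : Submodule.span R (Set.range v) = ⊤)
    {A B : Matrix n n R} (h : ∀ p q, v p ⬝ᵥ A *ᵥ v q = v p ⬝ᵥ B *ᵥ v q) : A = B := by
  apply (Matrix.toLinearMap₂' R (S₁ := R) (S₂ := R)).injective
  refine LinearMap.ext_on hv ?_
  rintro _ ⟨p, rfl⟩
  refine LinearMap.ext_on hv ?_
  rintro _ ⟨q, rfl⟩
  simpa [toLinearMap₂'_apply'] using h p q

/-- A computable copy of `levi`, so that identities between Levi-Civita symbols can be checked
by `decide`. -/
def leviInt {n m : ℕ} (x : Fin n → Fin m) : ℤ :=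
  ∏ p ∈ univ.filter (fun p : Fin n × Fin n => p.1 < p.2),
    (((x p.2 : ℕ) : ℤ) - ((x p.1 : ℕ) : ℤ)).sign

theorem levi_eq_leviInt {n m : ℕ} (x : Fin n → Fin m) : levi x = leviInt x := by
  simp [levi, leviInt]

theorem sum_eps5_mul_eps5 {i j k : Fin 5} (hki : k ≠ i) (hkj : k ≠ j) (p q : Fin 5) :
    ∑ m, ∑ n, eps5 k i j m n * eps5 k p q m n =
      2 * ((if p = i then 1 else 0) * (if q = j then 1 else 0) -
        (if p = j then 1 else 0) * (if q = i then 1 else 0)) := by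
  have h : ∀ k i j p q : Fin 5, k ≠ i → k ≠ j →
      ∑ m, ∑ n, leviInt ![k, i, j, m, n] * leviInt ![k, p, q, m, n] =
        2 * ((if p = i then 1 else 0) * (if q = j then 1 else 0) -
          (if p = j then 1 else 0) * (if q = i then 1 else 0)) := by
    decide +kernel
  simp only [eps5, levi_eq_leviInt]
  exact_mod_cast h k i j p q hki hkj

theorem cotetrad_eq_sub {E : Fin 5 → Fin 5 → Fin 4 → ℝ}
    (hclose : ∀ i j k, E i j + E j k + E k i = 0) (a b : Fin 5) :
    E a b = E a 0 - E b 0 := by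
  ext I
  have h000 := congrFun (hclose 0 0 0) I
  have ha00 := congrFun (hclose a 0 0) I
  have hab0 := congrFun (hclose a b 0) I
  simp only [Pi.add_apply, Pi.zero_apply, Pi.sub_apply] at *
  linarith

theorem cotetrad_self {E : Fin 5 → Fin 5 → Fin 4 → ℝ}
    (hclose : ∀ i j k, E i j + E j k + E k i = 0) (a : Fin 5) :
    E a a = 0 := by
  simpa using cotetrad_eq_sub hclose a a

theorem det4_cotetrad {E : Fin 5 → Fin 5 → Fin 4 → ℝ}
    (hclose : ∀ i j k, E i j + E j k + E k i = 0)
    (a b c d k : Fin 5) :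
    det4 (E a k) (E b k) (E c k) (E d k) =
      eps5 k a b c d * det4 (E 1 0) (E 2 0) (E 3 0) (E 4 0) := by
  have h := det_sub_comp_eq_levi_mul (fun l => E l 0) ![k, a, b, c, d]
  rw [det4_eq_det, det4_eq_det, eps5]
  convert h using 3
  · ext r
    fin_cases r <;> simp [cotetrad_eq_sub hclose _ k]
  · ext r
    fin_cases r <;> simp [cotetrad_self hclose]

theorem span_cotetrad {E : Fin 5 → Fin 5 → Fin 4 → ℝ}
    (hclose : ∀ i j k, E i j + E j k + E k i = 0)
    (hnd : LinearIndependent ℝ ![E 1 0, E 2 0, E 3 0, E 4 0]) (k : Fin 5) :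
    Submodule.span ℝ (Set.range fun l => E l k) = ⊤ := by
  rw [eq_top_iff, ← hnd.span_eq_top_of_card_eq_finrank' (by simp), Submodule.span_le]
  rintro _ ⟨r, rfl⟩
  have hr : ![E 1 0, E 2 0, E 3 0, E 4 0] r = E r.succ k - E 0 k := by
    rw [cotetrad_eq_sub hclose _ k, cotetrad_eq_sub hclose 0 k]
    fin_cases r <;> simp [cotetrad_self hclose]
  rw [hr]
  exact sub_mem (Submodule.subset_span ⟨_, rfl⟩) (Submodule.subset_span ⟨_, rfl⟩)

theorem stmt12_general (E : Fin 5 → Fin 5 → Fin 4 → ℝ)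
    (hclose : ∀ i j k, E i j + E j k + E k i = 0)
    (hnd : LinearIndependent ℝ ![E 1 0, E 2 0, E 3 0, E 4 0])
    (U : Fin 5 → Fin 4 → ℝ)
    (hU : ∀ i m k,
      U i ⬝ᵥ E m k = (if m = i then (1 : ℝ) else 0) - (if k = i then (1 : ℝ) else 0)) :
    ∀ i j k, k ≠ i → k ≠ j → ∀ I J,
      det4 (E 1 0) (E 2 0) (E 3 0) (E 4 0) * (U i I * U j J - U i J * U j I) =
        ∑ m, ∑ n, eps5 k i j m n *
          ((1 / 2) * ∑ M, ∑ N, eps4 I J M N * E m k M * E n k N) := by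
  intro i j k hki hkj I J
  set V := det4 (E 1 0) (E 2 0) (E 3 0) (E 4 0)
  have hUE : ∀ l, k ≠ l → ∀ p, U l ⬝ᵥ E p k = if p = l then 1 else 0 := fun l hkl p => by
    rw [hU, if_neg hkl, sub_zero]
  suffices hmat : V • wedgeV (U i) (U j) =
      ∑ m, ∑ n, eps5 k i j m n • hodge (vecMulVec (E m k) (E n k)) by
    simpa [wedgeV, hodge, Matrix.sum_apply, vecMulVec_apply, mul_assoc] using
      congrFun (congrFun hmat I) J
  refine Matrix.ext_of_dotProduct_mulVec_eq (span_cotetrad hclose hnd k) fun p q => ?_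
  simp only [smul_mulVec, dotProduct_smul, sum_mulVec, dotProduct_sum, smul_eq_mul,
    dotProduct_wedgeV_mulVec, dotProduct_hodge_vecMulVec_mulVec, det4_cotetrad hclose _ _ _ _ k]
  simp only [dotProduct_comm (E p k), hUE i hki, hUE j hkj]
  calc V * ((if p = i then 1 else 0) * (if q = j then 1 else 0) -
        (if p = j then 1 else 0) * (if q = i then 1 else 0))
      = V / 2 * ∑ m, ∑ n, eps5 k i j m n * eps5 k p q m n := by
        rw [sum_eps5_mul_eps5 hki hkj]; ring
    _ = _ := by
        simp only [mul_sum]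
        refine sum_congr rfl fun m _ => sum_congr rfl fun n _ => ?_
        ring

/-- the bivector identity V₄ (Uⁱ ∧ Uʲ) = ∑ₘₙ ε^{kijmn} ⋆(E_{mk} ∧ E_{nk})/2. -/
theorem stmt12 (E : Fin 5 → Fin 5 → Fin 4 → ℝ)
    (hanti : ∀ i j, E i j + E j i = 0)
    (hclose : ∀ i j k, E i j + E j k + E k i = 0)
    (hnd : LinearIndependent ℝ ![E 1 0, E 2 0, E 3 0, E 4 0])
    (U : Fin 5 → Fin 4 → ℝ)
    (hU : ∀ i m k,
      U i ⬝ᵥ E m k = (if m = i then (1 : ℝ) else 0) - (if k = i then (1 : ℝ) else 0)) :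
    ∀ i j k, k ≠ i → k ≠ j → ∀ I J,
      det4 (E 1 0) (E 2 0) (E 3 0) (E 4 0) * (U i I * U j J - U i J * U j I) =
        ∑ m, ∑ n, eps5 k i j m n *
          ((1 / 2) * ∑ M, ∑ N, eps4 I J M N * E m k M * E n k N) :=
  stmt12_general E hclose hnd U hU
end
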